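/- Let β > 0, λ > 0, and for s, s' ∈ [0, β] define f(s,s') = (e^{-|s-s'|λ} + e^{-(β-|s-s'|)λ})/(1 - e^{-βλ}). Then for all g ∈ L²([0,β]): ∫₀^β∫₀^β conj(g(s))·g(s')·f(s,s') ds ds' ≥ 0, i.e., the integral operator on L²([0,β]) with kernel f is positive semi-definite. -/

import Mathlib

/-!
The covariance is a Gram kernel. For `k(s, u) = e^{-λ ((s - u) mod β)}` and `0 ≤ s' ≤ s ≤ β`,
splitting `[0, β]` at `s'` and `s` gives
`∫₀^β k(s, u) k(s', u) du = (e^{-(s - s')λ} + e^{-(β - (s - s'))λ}) (1 - e^{-βλ}) / (2λ)`,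
so `f(s, s') = c ∫₀^β k(s, u) k(s', u) du` on `[0, β]²` with `c = 2λ / (1 - e^{-βλ})² > 0`.
By Fubini the quadratic form of `f` is then `c ∫₀^β |∫₀^β g(s) k(s, u) ds|² du ≥ 0`.
-/

open MeasureTheory Real Set Function ComplexConjugate

section GramKernel

variable {X Y : Type*} {K : X → Y → ℂ} {B : ℝ} {g : X → ℂ}

noncomputable def gramKernel [MeasurableSpace Y] (ν : Measure Y) (K : X → Y → ℂ) (s s' : X) :
    ℂ :=
  ∫ u, conj (K s u) * K s' u ∂ν

lemma gramKernel_ofReal [MeasurableSpace Y] (ν : Measure Y) (k : X → Y → ℝ) (s s' : X) :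
    gramKernel ν (fun s u => (k s u : ℂ)) s s' = ((∫ u, k s u * k s' u ∂ν : ℝ) : ℂ) := by
  simp only [gramKernel, Complex.conj_ofReal, ← Complex.ofReal_mul]
  exact integral_ofReal

noncomputable def kernelTransform [MeasurableSpace X] (μ : Measure X) (K : X → Y → ℂ)
    (g : X → ℂ) (u : Y) : ℂ :=
  ∫ s, g s * K s u ∂μ

lemma norm_kernelTransform_le [MeasurableSpace X] {μ : Measure X} (hKb : ∀ s u, ‖K s u‖ ≤ B)
    (hg : Integrable g μ) (u : Y) :
    ‖kernelTransform μ K g u‖ ≤ (∫ s, ‖g s‖ ∂μ) * B := by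
  rw [kernelTransform, ← integral_mul_const]
  refine norm_integral_le_of_norm_le (hg.norm.mul_const B) (.of_forall fun s => ?_)
  rw [norm_mul]
  exact mul_le_mul_of_nonneg_left (hKb s u) (norm_nonneg _)

variable [MeasurableSpace X] [MeasurableSpace Y] {μ : Measure X} {ν : Measure Y}

lemma aestronglyMeasurable_kernelTransform [SFinite μ] (hK : Measurable (uncurry K))
    (hg : AEStronglyMeasurable g μ) : AEStronglyMeasurable (kernelTransform μ K g) ν := by
  have : AEStronglyMeasurable (fun p : Y × X => g p.2 * K p.2 p.1) (ν.prod μ) :=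
    hg.comp_snd.mul (hK.comp measurable_swap).aestronglyMeasurable
  exact this.integral_prod_right'

lemma integral_mul_gramKernel [IsFiniteMeasure μ] [IsFiniteMeasure ν]
    (hK : Measurable (uncurry K)) (hKb : ∀ s u, ‖K s u‖ ≤ B) (hg : Integrable g μ) (s : X) :
    ∫ s', g s' * gramKernel ν K s s' ∂μ = ∫ u, conj (K s u) * kernelTransform μ K g u ∂ν := by
  have hint : Integrable (fun p : X × Y => conj (K s p.2) * K p.1 p.2 * g p.1) (μ.prod ν) := by
    refine (hg.comp_fst ν).bdd_mul (c := B * B) ?_ (.of_forall fun p => ?_)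
    · have hKs : Measurable (K s) := hK.comp measurable_prodMk_left
      exact (Complex.continuous_conj.comp_aestronglyMeasurable
        hKs.aestronglyMeasurable).comp_snd.mul hK.aestronglyMeasurable
    · rw [norm_mul, Complex.norm_conj]
      exact mul_le_mul (hKb _ _) (hKb _ _) (norm_nonneg _) ((norm_nonneg _).trans (hKb s p.2))
  calc ∫ s', g s' * gramKernel ν K s s' ∂μ
      = ∫ s', ∫ u, conj (K s u) * K s' u * g s' ∂ν ∂μ := by
        simp only [gramKernel, ← integral_mul_const, mul_comm (g _)]
    _ = ∫ u, ∫ s', conj (K s u) * K s' u * g s' ∂μ ∂ν := integral_integral_swap hint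
    _ = ∫ u, conj (K s u) * kernelTransform μ K g u ∂ν := by
        simp only [kernelTransform, ← integral_const_mul, mul_assoc, mul_comm (g _)]

theorem integral_integral_conj_mul_gramKernel [IsFiniteMeasure μ] [IsFiniteMeasure ν]
    (hK : Measurable (uncurry K)) (hKb : ∀ s u, ‖K s u‖ ≤ B) (hg : Integrable g μ) :
    ∫ s, ∫ s', conj (g s) * g s' * gramKernel ν K s s' ∂μ ∂μ
      = ((∫ u, ‖kernelTransform μ K g u‖ ^ 2 ∂ν : ℝ) : ℂ) := by
  have hinner := integral_mul_gramKernel (ν := ν) hK hKb hg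
  set H := kernelTransform μ K g
  have hint : Integrable (fun p : X × Y => conj (g p.1) * (conj (K p.1 p.2) * H p.2))
      (μ.prod ν) := by
    have hg' : Integrable (fun s => conj (g s)) μ :=
      Complex.conjCLE.toContinuousLinearMap.integrable_comp hg
    refine (hg'.comp_fst ν).mul_bdd (c := B * ((∫ s, ‖g s‖ ∂μ) * B)) ?_
      (.of_forall fun p => ?_)
    · exact (Complex.continuous_conj.comp_aestronglyMeasurable hK.aestronglyMeasurable).mul
        (aestronglyMeasurable_kernelTransform hK hg.1).comp_snd
    · rw [norm_mul, Complex.norm_conj]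
      exact mul_le_mul (hKb _ _) (norm_kernelTransform_le hKb hg _) (norm_nonneg _)
        ((norm_nonneg _).trans (hKb p.1 p.2))
  calc ∫ s, ∫ s', conj (g s) * g s' * gramKernel ν K s s' ∂μ ∂μ
      = ∫ s, ∫ u, conj (g s) * (conj (K s u) * H u) ∂ν ∂μ := by
        simp_rw [mul_assoc, integral_const_mul, hinner]
    _ = ∫ u, ∫ s, conj (g s) * (conj (K s u) * H u) ∂μ ∂ν := integral_integral_swap hint
    _ = ∫ u, conj (H u) * H u ∂ν := by
        refine integral_congr_ae (.of_forall fun u => ?_)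
        simp only [H, kernelTransform, ← integral_conj, ← integral_mul_const, map_mul]
        exact integral_congr_ae (.of_forall fun s => by ring)
    _ = ((∫ u, ‖H u‖ ^ 2 ∂ν : ℝ) : ℂ) := by
        simp only [Complex.conj_mul', ← Complex.ofReal_pow]
        exact integral_ofReal

theorem re_integral_integral_conj_mul_nonneg_of_ae_eq_gramKernel [IsFiniteMeasure μ]
    [IsFiniteMeasure ν] (hK : Measurable (uncurry K)) (hKb : ∀ s u, ‖K s u‖ ≤ B)
    (hg : Integrable g μ) {F : X → X → ℂ} {c : ℝ} (hc : 0 ≤ c)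
    (hF : ∀ᵐ s ∂μ, ∀ᵐ s' ∂μ, F s s' = c * gramKernel ν K s s') :
    0 ≤ (∫ s, ∫ s', conj (g s) * g s' * F s s' ∂μ ∂μ).re := by
  have hFc : ∫ s, ∫ s', conj (g s) * g s' * F s s' ∂μ ∂μ
      = c * ∫ s, ∫ s', conj (g s) * g s' * gramKernel ν K s s' ∂μ ∂μ := by
    rw [← integral_const_mul]
    refine integral_congr_ae ?_
    filter_upwards [hF] with s hs
    rw [← integral_const_mul]
    refine integral_congr_ae ?_
    filter_upwards [hs] with s' hs'
    rw [hs']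
    ring
  rw [hFc, integral_integral_conj_mul_gramKernel hK hKb hg, ← Complex.ofReal_mul,
    Complex.ofReal_re]
  exact mul_nonneg hc (integral_nonneg fun u => by positivity)

end GramKernel

lemma integral_exp_mul_add {a : ℝ} (ha : a ≠ 0) (c lo hi : ℝ) :
    ∫ u in lo..hi, exp (a * u + c) = (exp (a * hi + c) - exp (a * lo + c)) / a := by
  rw [intervalIntegral.integral_comp_mul_add (fun x => exp x) ha, integral_exp, smul_eq_mul]
  field_simp

lemma integral_eq_of_eqOn_Ioc_exp {F : ℝ → ℝ} {a c lo hi : ℝ} (ha : a ≠ 0) (hlh : lo ≤ hi)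
    (hF : EqOn F (fun u => exp (a * u + c)) (Ioc lo hi)) :
    ∫ u in lo..hi, F u = (exp (a * hi + c) - exp (a * lo + c)) / a := by
  rw [intervalIntegral.integral_of_le hlh, setIntegral_congr_fun measurableSet_Ioc hF,
    ← intervalIntegral.integral_of_le hlh, integral_exp_mul_add ha]

section PeriodicExpKernel

variable {lam β s s' u : ℝ}

noncomputable def periodicExpKernel (lam β s u : ℝ) : ℝ :=
  exp (-lam * β * Int.fract ((s - u) / β))

lemma measurable_periodicExpKernel : Measurable (uncurry (periodicExpKernel lam β)) :=
  measurable_exp.comp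
    (measurable_const.mul ((measurable_fst.sub measurable_snd).div_const β).fract)

lemma abs_periodicExpKernel_le_one (hlam : 0 ≤ lam) (hβ : 0 ≤ β) :
    |periodicExpKernel lam β s u| ≤ 1 := by
  rw [periodicExpKernel, abs_of_pos (exp_pos _)]
  refine exp_le_one_iff.2 ?_
  have := mul_nonneg (mul_nonneg hlam hβ) (Int.fract_nonneg ((s - u) / β))
  linarith

lemma periodicExpKernel_of_le (hβ : 0 < β) (hus : u ≤ s) (hsu : s - u < β) :
    periodicExpKernel lam β s u = exp (-lam * (s - u)) := by
  rw [periodicExpKernel, Int.fract_eq_self.2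
    ⟨div_nonneg (sub_nonneg.2 hus) hβ.le, (div_lt_one hβ).2 hsu⟩]
  field_simp

lemma periodicExpKernel_of_lt (hβ : 0 < β) (hsu : s < u) (hus : u - s ≤ β) :
    periodicExpKernel lam β s u = exp (-lam * (s - u + β)) := by
  have hfract : Int.fract ((s - u) / β) = (s - u) / β + 1 := by
    refine Int.fract_eq_iff.2 ⟨?_, ?_, -1, by push_cast; ring⟩
    · have : -1 ≤ (s - u) / β := by rw [le_div_iff₀ hβ]; linarith
      linarith
    · linarith [div_neg_of_neg_of_pos (sub_neg.2 hsu) hβ]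
  rw [periodicExpKernel, hfract]
  field_simp

lemma intervalIntegrable_periodicExpKernel_mul (hlam : 0 ≤ lam) (hβ : 0 ≤ β) (a b : ℝ) :
    IntervalIntegrable (fun u => periodicExpKernel lam β s u * periodicExpKernel lam β s' u)
      volume a b := by
  refine intervalIntegrable_const.mono_fun' (g := fun _ => (1 : ℝ)) ?_ (.of_forall fun u => ?_)
  · exact ((measurable_periodicExpKernel.comp measurable_prodMk_left).mul
      (measurable_periodicExpKernel.comp measurable_prodMk_left)).aestronglyMeasurable
  · simp only [norm_mul, Real.norm_eq_abs]
    exact mul_le_one₀ (abs_periodicExpKernel_le_one hlam hβ) (abs_nonneg _)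
      (abs_periodicExpKernel_le_one hlam hβ)

lemma integral_periodicExpKernel_mul_of_le (hβ : 0 < β) (hlam : 0 < lam)
    (hs' : 0 ≤ s') (hss' : s' ≤ s) (hs : s ≤ β) :
    ∫ u in 0..β, periodicExpKernel lam β s u * periodicExpKernel lam β s' u
      = (exp (-(s - s') * lam) + exp (-(β - (s - s')) * lam)) * (1 - exp (-β * lam))
          / (2 * lam) := by
  have h2lam : 2 * lam ≠ 0 := by positivity
  let F u := periodicExpKernel lam β s u * periodicExpKernel lam β s' u
  have hint := intervalIntegrable_periodicExpKernel_mul (s := s) (s' := s') hlam.le hβ.le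
  have e₁ := integral_eq_of_eqOn_Ioc_exp (F := F) (c := -lam * (s + s')) h2lam hs'
    fun u hu => by
      simp only [F]
      rw [periodicExpKernel_of_le hβ (hu.2.trans hss') (by linarith [hu.1]),
        periodicExpKernel_of_le hβ hu.2 (by linarith [hu.1]), ← exp_add]
      ring_nf
  have e₂ := integral_eq_of_eqOn_Ioc_exp (F := F) (c := -lam * (s + s' + β)) h2lam hss'
    fun u hu => by
      simp only [F]
      rw [periodicExpKernel_of_le hβ hu.2 (by linarith [hu.1]),
        periodicExpKernel_of_lt hβ hu.1 (by linarith [hu.2]), ← exp_add]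
      ring_nf
  have e₃ := integral_eq_of_eqOn_Ioc_exp (F := F) (c := -lam * (s + s' + 2 * β)) h2lam hs
    fun u hu => by
      simp only [F]
      rw [periodicExpKernel_of_lt hβ hu.1 (by linarith [hu.2]),
        periodicExpKernel_of_lt hβ (hss'.trans_lt hu.1) (by linarith [hu.2]), ← exp_add]
      ring_nf
  rw [← intervalIntegral.integral_add_adjacent_intervals (hint 0 s') (hint s' β),
    ← intervalIntegral.integral_add_adjacent_intervals (hint s' s) (hint s β), e₁, e₂, e₃]
  field_simp
  simp only [mul_sub, add_mul, ← exp_add]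
  ring_nf

lemma integral_periodicExpKernel_mul (hβ : 0 < β) (hlam : 0 < lam)
    (hs : s ∈ Icc 0 β) (hs' : s' ∈ Icc 0 β) :
    ∫ u in Icc 0 β, periodicExpKernel lam β s u * periodicExpKernel lam β s' u
      = (exp (-|s - s'| * lam) + exp (-(β - |s - s'|) * lam)) * (1 - exp (-β * lam))
          / (2 * lam) := by
  rw [integral_Icc_eq_integral_Ioc, ← intervalIntegral.integral_of_le hβ.le]
  rcases le_total s' s with h | h
  · rw [abs_of_nonneg (sub_nonneg.2 h)]
    exact integral_periodicExpKernel_mul_of_le hβ hlam hs'.1 h hs.2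
  · rw [abs_sub_comm, abs_of_nonneg (sub_nonneg.2 h)]
    simp_rw [mul_comm (periodicExpKernel lam β s _)]
    exact integral_periodicExpKernel_mul_of_le hβ hlam hs.1 h hs'.2

noncomputable def thermalCovariance (β lam s s' : ℝ) : ℝ :=
  (exp (-|s - s'| * lam) + exp (-(β - |s - s'|) * lam)) / (1 - exp (-β * lam))

lemma thermalCovariance_eq_mul_gramKernel (hβ : 0 < β) (hlam : 0 < lam)
    (hs : s ∈ Icc 0 β) (hs' : s' ∈ Icc 0 β) :
    (thermalCovariance β lam s s' : ℂ) = ((2 * lam / (1 - exp (-β * lam)) ^ 2 : ℝ) : ℂ) *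
      gramKernel (volume.restrict (Icc 0 β))
        (fun s u => (periodicExpKernel lam β s u : ℂ)) s s' := by
  have hden : 1 - exp (-β * lam) ≠ 0 := (sub_pos.2 (exp_lt_one_iff.2 (by nlinarith))).ne'
  rw [gramKernel_ofReal, integral_periodicExpKernel_mul hβ hlam hs hs', ← Complex.ofReal_mul,
    thermalCovariance]
  congr 1
  field_simp

end PeriodicExpKernel

/-- the integral operator on `L²([0,β])` with kernel the β-periodic thermal
covariance `f(s,s') = (e^{-|s-s'|λ}+e^{-(β-|s-s'|)λ})/(1-e^{-βλ})` is positive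
semi-definite. -/
theorem stmt19 (β lam : ℝ) (hβ : 0 < β) (hlam : 0 < lam)
    (g : ℝ → ℂ) (hg : MemLp g 2 (volume.restrict (Set.Icc 0 β))) :
    let f : ℝ → ℝ → ℝ := fun s s' =>
      (Real.exp (-|s - s'| * lam) + Real.exp (-(β - |s - s'|) * lam)) /
        (1 - Real.exp (-β * lam))
    0 ≤ (∫ s in Set.Icc (0:ℝ) β, ∫ s' in Set.Icc (0:ℝ) β,
        (starRingEnd ℂ) (g s) * g s' * ((f s s' : ℝ) : ℂ)).re := by
  intro f
  refine re_integral_integral_conj_mul_nonneg_of_ae_eq_gramKernel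
    (μ := volume.restrict (Icc 0 β)) (ν := volume.restrict (Icc 0 β))
    (K := fun s u => (periodicExpKernel lam β s u : ℂ)) (B := 1)
    (c := 2 * lam / (1 - exp (-β * lam)) ^ 2)
    (Complex.measurable_ofReal.comp measurable_periodicExpKernel)
    (fun s u => by simpa using abs_periodicExpKernel_le_one hlam.le hβ.le)
    (hg.integrable one_le_two) (by positivity) ?_
  filter_upwards [ae_restrict_mem measurableSet_Icc] with s hs
  filter_upwards [ae_restrict_mem measurableSet_Icc] with s' hs'
  exact thermalCovariance_eq_mul_gramKernel hβ hlam hs hs'
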